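/- Let 𝒯 be a set of k rooted phylogenetic trees. If (ℬ₁,…,ℬ_d) is a decomposition of a sub-forest 𝒜 of 𝒯, then masp(𝒜) ≥ masp(ℬ₁) + … + masp(ℬ_d). -/

import Mathlib

/-- Rooted, unordered, leaf-labelled trees:
a tree is a single labelled leaf, or an (internal) root node with a list of subtrees
attached to it.  Being unordered, such trees are considered up to the
isomorphism `PTree.Iso` below.  The empty tree is represented by `none` in
`Option (PTree α)`. -/
inductive PTree (α : Type) : Type where
  | leaf : α → PTree α
  | node : List (PTree α) → PTree α

namespace PTree

variable {α : Type} [DecidableEq α]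

theorem sizeOf_lt_of_mem {α : Type} {c : PTree α} {cs : List (PTree α)}
    (h : c ∈ cs) : sizeOf c < sizeOf (PTree.node cs) := by
  have := List.sizeOf_lt_of_mem h
  simp only [node.sizeOf_spec]; omega

/-- `Subtree s t` : `s` is the complete subtree rooted at some node of `t`. -/
inductive Subtree : PTree α → PTree α → Prop where
  | refl (t : PTree α) : Subtree t t
  | child {s c : PTree α} {cs : List (PTree α)} :
      c ∈ cs → Subtree s c → Subtree s (node cs)

/-- The list of leaf labels of a tree. -/
def labelList : PTree α → List α
  | leaf a => [a]
  | node cs => cs.attach.flatMap (fun c => labelList c.1)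
decreasing_by exact sizeOf_lt_of_mem c.2

/-- The set `L(T)` of leaf labels of a tree. -/
def labels (t : PTree α) : Finset α := t.labelList.toFinset

/-- The size of a tree: the number of its leaves. -/
def treeSize (t : PTree α) : ℕ := t.labels.card

/-- The label set of a possibly empty tree. -/
def olabels : Option (PTree α) → Finset α
  | none => ∅
  | some t => t.labels

/-- Connecting a list of trees by a common root.  The empty list yields the
empty tree and a single tree yields that tree itself (no degree-two node is
created). -/
def connect : List (PTree α) → Option (PTree α)
  | [] => none
  | [t] => some t
  | ts => some (node ts)

/-- The restriction `T|S` of `T` to a label set `S`: all leaves with labels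
outside `S` are removed and all internal nodes of degree two are suppressed. -/
def restrict (S : Finset α) : PTree α → Option (PTree α)
  | leaf a => if a ∈ S then some (leaf a) else none
  | node cs => connect ((cs.attach.map (fun c => restrict S c.1)).reduceOption)
decreasing_by exact sizeOf_lt_of_mem c.2

/-- Restriction of a possibly empty tree. -/
def orestrict (S : Finset α) (t : Option (PTree α)) : Option (PTree α) :=
  t.bind (restrict S)

/-- Isomorphism (equality) of unordered leaf-labelled trees: equality of trees
up to reordering of the children of each node. -/
inductive Iso : PTree α → PTree α → Prop where
  | leaf (a : α) : Iso (leaf a) (leaf a)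
  | node {cs ds ds' : List (PTree α)} :
      List.Forall₂ Iso cs ds' → ds'.Perm ds → Iso (node cs) (node ds)

/-- One edge contraction: the edge between a node and one of its (internal)
children is contracted, merging the child into the parent. -/
inductive Contract : PTree α → PTree α → Prop where
  | top (l r ds : List (PTree α)) :
      Contract (node (l ++ node ds :: r)) (node (l ++ ds ++ r))
  | child {c c' : PTree α} (l r : List (PTree α)) :
      Contract c c' → Contract (node (l ++ c :: r)) (node (l ++ c' :: r))

/-- `T` refines `T'` (written `T ⊵ T'`): `T'` can be obtained (as an
unordered tree) by contracting some edges of `T`. -/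
def Refines (t t' : PTree α) : Prop :=
  ∃ u, Relation.ReflTransGen Contract t u ∧ Iso u t'

/-- Refinement of possibly empty trees. -/
def ORefines : Option (PTree α) → Option (PTree α) → Prop
  | none, none => True
  | some a, some b => Refines a b
  | _, _ => False

/-- Isomorphism (equality) of possibly empty unordered trees. -/
def OIso : Option (PTree α) → Option (PTree α) → Prop
  | none, none => True
  | some a, some b => Iso a b
  | _, _ => False

/-- A possibly empty tree is (empty or) a complete subtree of `T`. -/
def OSubtree (T : PTree α) : Option (PTree α) → Prop
  | none => True
  | some t => Subtree t T

/-- No internal node of degree two (after the usual suppression convention):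
every internal node of the rooted tree has at least two children. -/
def NoUnaryNodes (T : PTree α) : Prop :=
  ∀ cs : List (PTree α), Subtree (node cs) T → 2 ≤ cs.length

/-- Every node of the rooted tree has degree at most `D` (the degree of the
root is its number of children; the degree of any other internal node is its
number of children plus one). -/
def DegLE (D : ℕ) (T : PTree α) : Prop :=
  (∀ cs : List (PTree α), T = node cs → cs.length ≤ D) ∧
  (∀ cs : List (PTree α), Subtree (node cs) T → node cs ≠ T → cs.length + 1 ≤ D)

/-- A rooted tree is binary if every internal node has exactly two children. -/
def Binary (T : PTree α) : Prop :=
  ∀ cs : List (PTree α), Subtree (node cs) T → cs.length = 2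

/-- A cut-subtree of `T`: the empty tree, or the tree obtained by selecting
some (at least one) of the subtrees attached to an internal node of `T` and
connecting those subtrees by a common root. -/
def IsCutSubtree (T : PTree α) (a : Option (PTree α)) : Prop :=
  a = none ∨ ∃ cs sel : List (PTree α),
    Subtree (node cs) T ∧ sel.Sublist cs ∧ sel ≠ [] ∧ a = connect sel

variable {k : ℕ}

/-- A cut-subforest of `𝒯`: each component is a cut-subtree of the
corresponding tree, and at least one component is nonempty. -/
def IsCutSubforest (𝒯 : Fin k → PTree α) (A : Fin k → Option (PTree α)) : Prop :=
  (∀ i, IsCutSubtree (𝒯 i) (A i)) ∧ ∃ i, A i ≠ none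

/-- A sub-forest of `𝒯`: each component is the empty tree or a complete
subtree rooted at some node of the corresponding tree, and at least one
component is nonempty. -/
def IsSubForest (𝒯 : Fin k → PTree α) (A : Fin k → Option (PTree α)) : Prop :=
  (∀ i, OSubtree (𝒯 i) (A i)) ∧ ∃ i, A i ≠ none

/-- The set of all labels occurring in the trees of `𝒯`. -/
def allLabels (𝒯 : Fin k → PTree α) : Finset α :=
  Finset.univ.biUnion fun i => (𝒯 i).labels

/-- A (cut-sub)forest is terminal if each component is the empty tree or a
single leaf of the corresponding tree. -/
def IsTerminal (𝒯 : Fin k → PTree α) (A : Fin k → Option (PTree α)) : Prop :=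
  ∀ i, A i = none ∨ ∃ a : α, A i = some (leaf a) ∧ Subtree (leaf a) (𝒯 i)

/-- `Λ(𝒜) = { l ∈ ⋃_j L(𝒜⁽ʲ⁾) ∣ ∀ i, l ∉ L(𝒯⁽ⁱ⁾) − L(𝒜⁽ⁱ⁾) }`. -/
def lambdaSet (𝒯 : Fin k → PTree α) (A : Fin k → Option (PTree α)) : Finset α :=
  (Finset.univ.biUnion fun j => olabels (A j)).filter
    fun l => ∀ i, l ∉ (𝒯 i).labels \ olabels (A i)

/-- `Y` is a compatible supertree of the forest `A`:
`Y|L(A⁽ⁱ⁾) ⊵ A⁽ⁱ⁾|L(Y)` for every `i`. -/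
def IsCompatibleSupertree (A : Fin k → Option (PTree α)) (Y : PTree α) : Prop :=
  ∀ i, ORefines (restrict (olabels (A i)) Y) (orestrict Y.labels (A i))

/-- `X` is an agreement supertree of the forest `A`:
`X|L(A⁽ⁱ⁾) = A⁽ⁱ⁾|L(X)` (as unordered trees) for every `i`. -/
def IsAgreementSupertree (A : Fin k → Option (PTree α)) (X : PTree α) : Prop :=
  ∀ i, OIso (restrict (olabels (A i)) X) (orestrict X.labels (A i))

/-- An embedded supertree of a cut-subforest `A` of `𝒯`: a distinctly
leaf-labelled compatible supertree `Y` of `A`, with leaves labelled by labels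
of `𝒯`, such that `L(Y) ∩ L(𝒯⁽ⁱ⁾) ⊆ L(A⁽ⁱ⁾)` for all `i`. -/
def IsEmbeddedSupertree (𝒯 : Fin k → PTree α) (A : Fin k → Option (PTree α))
    (Y : PTree α) : Prop :=
  Y.labelList.Nodup ∧ Y.labels ⊆ allLabels 𝒯 ∧
  IsCompatibleSupertree A Y ∧
  ∀ i, Y.labels ∩ (𝒯 i).labels ⊆ olabels (A i)

/-- An enclosed supertree of a sub-forest `A` of `𝒯`: a distinctly
leaf-labelled agreement supertree `X` of `A`, with leaves labelled by labels
of `𝒯`, such that `L(X) ∩ L(𝒯⁽ⁱ⁾) ⊆ L(A⁽ⁱ⁾)` for all `i`. -/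
def IsEnclosedSupertree (𝒯 : Fin k → PTree α) (A : Fin k → Option (PTree α))
    (X : PTree α) : Prop :=
  X.labelList.Nodup ∧ X.labels ⊆ allLabels 𝒯 ∧
  IsAgreementSupertree A X ∧
  ∀ i, X.labels ∩ (𝒯 i).labels ⊆ olabels (A i)

/-- `mcsp 𝒯 A` : the maximum size of an embedded supertree of `A`. -/
noncomputable def mcsp (𝒯 : Fin k → PTree α) (A : Fin k → Option (PTree α)) : ℕ :=
  sSup {m : ℕ | ∃ Y : PTree α, IsEmbeddedSupertree 𝒯 A Y ∧ m = Y.treeSize}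

/-- `masp 𝒯 A` : the maximum size of an enclosed supertree of `A`. -/
noncomputable def masp (𝒯 : Fin k → PTree α) (A : Fin k → Option (PTree α)) : ℕ :=
  sSup {m : ℕ | ∃ X : PTree α, IsEnclosedSupertree 𝒯 A X ∧ m = X.treeSize}

end PTree

/-- `ListSplit s l r` : the list `s` is partitioned into the two
(complementary) sublists `l` and `r`. -/
inductive ListSplit {β : Type} : List β → List β → List β → Prop where
  | nil : ListSplit [] [] []
  | left {s l r : List β} (x : β) : ListSplit s l r → ListSplit (x :: s) (x :: l) r
  | right {s l r : List β} (x : β) : ListSplit s l r → ListSplit (x :: s) l (x :: r)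

namespace PTree

variable {α : Type} [DecidableEq α] {k : ℕ}

/-- `(AL, AR)` is a bipartite of the forest `A`: for every `i` the set of
subtrees attached to the root of `A⁽ⁱ⁾` is partitioned into two sets, each of
which is connected by a common root to form `AL⁽ⁱ⁾` resp. `AR⁽ⁱ⁾` (an empty
set of subtrees yielding the empty tree). -/
def IsBipartite (A AL AR : Fin k → Option (PTree α)) : Prop :=
  ∀ i, ∃ s sL sR : List (PTree α),
    A i = connect s ∧ ListSplit s sL sR ∧ AL i = connect sL ∧ AR i = connect sR

/-- Condition, at one component, for `(b 1, …, b d)` to decompose `a`: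
either exactly one `b j` is isomorphic to `a` and the others are empty, or at
least two of the `b j` are nonempty and the nonempty ones are isomorphic to
pairwise distinct subtrees attached to the root of `a`. -/
def DecompAt {d : ℕ} (a : Option (PTree α)) (b : Fin d → Option (PTree α)) : Prop :=
  (∃ j, OIso (b j) a ∧ ∀ j', j' ≠ j → b j' = none) ∨
  (∃ cs : List (PTree α), a = some (node cs) ∧
    2 ≤ (Finset.univ.filter fun j => (b j).isSome).card ∧
    ∃ idx : Fin d → Option (Fin cs.length),
      (∀ j, b j = none ↔ idx j = none) ∧
      (∀ j t m, b j = some t → idx j = some m → Iso t (cs.get m)) ∧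
      (∀ j j' m, idx j = some m → idx j' = some m → j = j'))

/-- `(B 1, …, B d)` is a decomposition of the forest `A` (each `B j` being a
possibly empty sub-forest of `𝒯`). -/
def IsDecomposition (𝒯 : Fin k → PTree α) (A : Fin k → Option (PTree α))
    (d : ℕ) (B : Fin d → Fin k → Option (PTree α)) : Prop :=
  2 ≤ d ∧ (∀ j i, OSubtree (𝒯 i) (B j i)) ∧ ∀ i, DecompAt (A i) fun j => B j i

/-- The root of the (nonempty) cut-subtree `a` is an internal node of `T`,
i.e. `a` is the complete subtree of `T` rooted at an internal node of `T`. -/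
def InternalRooted (T : PTree α) : Option (PTree α) → Prop
  | none => False
  | some t => (∃ cs : List (PTree α), t = node cs) ∧ Subtree t T

/-- One rerooting step: the root is moved to an adjacent internal node. -/
inductive Reroot1 : PTree α → PTree α → Prop where
  | step (l r ds : List (PTree α)) :
      Reroot1 (node (l ++ node ds :: r)) (node (ds ++ [node (l ++ r)]))

/-- `F` is a rooted variant of the unrooted tree (represented by) `T`:
`F` is obtained by rooting `T` at some internal node. -/
def RootedVariant (T F : PTree α) : Prop := Relation.ReflTransGen Reroot1 T F

/-- A maximal subtree of the unrooted tree (represented by) `T`: a rooted tree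
obtained by first rooting `T` at some internal node and then removing at most
one nontrivial subtree attached to that node. -/
def IsMaximalSubtree (T A : PTree α) : Prop :=
  ∃ cs : List (PTree α), RootedVariant T (node cs) ∧
    (A = node cs ∨ ∃ l r ds : List (PTree α), cs = l ++ node ds :: r ∧ A = node (l ++ r))

/-- `T` (a rooted tree, rooted at an internal node) represents an unrooted
tree without vertices of degree two: the root has at least three neighbours
and every other internal vertex has at least three neighbours as well. -/
def IsUnrootedRep (T : PTree α) : Prop :=
  (∃ cs : List (PTree α), T = node cs ∧ 3 ≤ cs.length) ∧
  ∀ cs : List (PTree α), Subtree (node cs) T → node cs ≠ T → 2 ≤ cs.length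

end PTree

/-!
Take for every `ℬⱼ` an enclosed supertree `Xⱼ` of maximum size (one exists: the tree without
leaves is always enclosed) and join all the `Xⱼ` below a new root. In every tree `𝒯⁽ⁱ⁾` distinct
`ℬⱼ⁽ⁱ⁾` are empty or isomorphic to distinct children of the root of `𝒜⁽ⁱ⁾`, so they have disjoint
label sets; as `Xⱼ` meets `L(𝒯⁽ⁱ⁾)` only inside `L(ℬⱼ⁽ⁱ⁾)`, the `Xⱼ` have pairwise disjoint leaf
sets and the joined tree has size `∑ masp(ℬⱼ)`. Restricted to `L(𝒜⁽ⁱ⁾)`, the joined tree is the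
common root above the restrictions `Xⱼ|L(ℬⱼ⁽ⁱ⁾) = ℬⱼ⁽ⁱ⁾|L(Xⱼ)`, which matches, child by child,
the root of `𝒜⁽ⁱ⁾` restricted to the joined leaf set; so the joined tree is an enclosed supertree
of `𝒜`.
-/

namespace List

theorem Forall₂.trans_of_mem {α β γ : Type*} {R : α → β → Prop} {S : β → γ → Prop}
    {T : α → γ → Prop} {l₁ : List α} {l₂ : List β} {l₃ : List γ}
    (h : ∀ a ∈ l₁, ∀ b c, R a b → S b c → T a c) :
    Forall₂ R l₁ l₂ → Forall₂ S l₂ l₃ → Forall₂ T l₁ l₃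
  | .nil, .nil => .nil
  | .cons hab h₁, .cons hbc h₂ =>
    .cons (h _ mem_cons_self _ _ hab hbc)
      (h₁.trans_of_mem (fun a ha => h a (mem_cons_of_mem _ ha)) h₂)

theorem Forall₂.imp_of_mem {α β : Type*} {R S : α → β → Prop} {l₁ : List α} {l₂ : List β}
    (h : ∀ a ∈ l₁, ∀ b, R a b → S a b) : Forall₂ R l₁ l₂ → Forall₂ S l₁ l₂
  | .nil => .nil
  | .cons hab h₁ =>
    .cons (h _ mem_cons_self _ hab) (h₁.imp_of_mem fun a ha => h a (mem_cons_of_mem _ ha))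

theorem Forall₂.flatten_perm {α : Type*} {L M : List (List α)} :
    Forall₂ Perm L M → L.flatten.Perm M.flatten
  | .nil => .refl _
  | .cons h₁ h₂ => by simpa using h₁.append h₂.flatten_perm

theorem Forall₂.reduceOption {α β : Type*} {R : α → β → Prop} {L : List (Option α)}
    {M : List (Option β)} (h : Forall₂ (Option.Rel R) L M) :
    Forall₂ R L.reduceOption M.reduceOption :=
  rel_filterMap (fun _ _ h => h) h

theorem forall₂_ofFn {α β : Type*} {R : α → β → Prop} {n : ℕ} {f : Fin n → α} {g : Fin n → β}
    (h : ∀ j, R (f j) (g j)) : Forall₂ R (ofFn f) (ofFn g) := by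
  simpa [ofFn_eq_map, forall₂_map_left_iff, forall₂_map_right_iff] using h

theorem perm_reduceOption_ofFn_bind {γ : Type*} {d n : ℕ} {p : Fin d → Option (Fin n)}
    {F : Fin n → Option γ} (hinj : ∀ j j' m, p j = some m → p j' = some m → j = j')
    (hsurj : ∀ m, F m ≠ none → ∃ j, p j = some m) :
    (ofFn fun j => (p j).bind F).reduceOption.Perm (ofFn F).reduceOption := by
  simp only [reduceOption, ofFn_eq_map, filterMap_map, Function.comp_def, id, ← filterMap_filterMap]
  have himage : (filterMap p (finRange d)).Nodup :=
    (nodup_finRange d).filterMap fun j j' m hj hj' => hinj j j' m hj hj'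
  obtain ⟨l, hl, hsub⟩ := himage.subperm fun m _ => mem_finRange m
  obtain ⟨rest, hrest⟩ := hsub.exists_perm_append
  have hrest_none : filterMap F rest = [] := by
    have hdisj := (hrest.trans (hl.append_right rest)).nodup_iff.1 (nodup_finRange n)
    refine filterMap_eq_nil_iff.2 fun m hm => by_contra fun hF => ?_
    obtain ⟨j, hj⟩ := hsurj m hF
    exact disjoint_of_nodup_append hdisj (mem_filterMap.2 ⟨j, mem_finRange j, hj⟩) hm
  have := (hrest.trans (hl.append_right rest)).filterMap F
  rw [filterMap_append, hrest_none, append_nil] at this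
  exact this.symm

theorem perm_reduceOption_ofFn_of_eq_none {γ : Type*} {d : ℕ} {f : Fin d → Option γ}
    {j₀ : Fin d} (h : ∀ j ≠ j₀, f j = none) : (ofFn f).reduceOption.Perm (f j₀).toList := by
  simp only [reduceOption, ofFn_eq_map, filterMap_map, Function.comp_def, id]
  have hrest : filterMap f ((finRange d).erase j₀) = [] :=
    filterMap_eq_nil_iff.2 fun j hj => h j ((nodup_finRange d).mem_erase_iff.1 hj).1
  have := (perm_cons_erase (mem_finRange j₀)).filterMap f
  rw [filterMap_cons, hrest] at this
  cases hj₀ : f j₀ <;> simpa [hj₀] using this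

end List

namespace PTree

section Iso

variable {α : Type}

@[elab_as_elim, induction_eliminator]
theorem induction {motive : PTree α → Prop} (leaf : ∀ a, motive (.leaf a))
    (node : ∀ cs, (∀ c ∈ cs, motive c) → motive (.node cs)) (t : PTree α) : motive t :=
  PTree.rec (motive_1 := motive) (motive_2 := fun cs => ∀ c ∈ cs, motive c) leaf node
    (fun _ h => absurd h List.not_mem_nil)
    (fun _ _ hc hcs _ h => (List.mem_cons.1 h).elim (· ▸ hc) (hcs _)) t

theorem Iso.refl (t : PTree α) : Iso t t := by
  induction t with
  | leaf a => exact .leaf a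
  | node cs ih => exact .node (List.forall₂_same.2 ih) (.refl cs)

theorem Iso.trans {t u v : PTree α} : Iso t u → Iso u v → Iso t v := by
  induction t generalizing u v with
  | leaf a => rintro ⟨⟩ h; exact h
  | node cs ih =>
    rintro (_ | ⟨hcs, hperm⟩) (_ | ⟨hds, hperm'⟩)
    obtain ⟨es, hes, hperm''⟩ := List.perm_comp_forall₂ hperm hds
    exact .node (hcs.trans_of_mem (S := Iso) (fun c hc _ _ => ih c hc) hes) (hperm''.trans hperm')

theorem OIso.refl (o : Option (PTree α)) : OIso o o := by
  cases o
  · trivial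
  · exact Iso.refl _

theorem OIso.trans {o p q : Option (PTree α)} : OIso o p → OIso p q → OIso o q := by
  match o, p, q with
  | none, none, none => exact fun _ _ => trivial
  | some _, some _, some _ => exact Iso.trans
  | none, some _, _ | some _, none, _ | _, none, some _ | _, some _, none => nofun

theorem labelList_node (cs : List (PTree α)) :
    (node cs).labelList = (cs.map labelList).flatten := by
  rw [labelList, List.flatMap_def, List.attach_map_val]

theorem Iso.labelList_perm {t u : PTree α} : Iso t u → t.labelList.Perm u.labelList := by
  induction t generalizing u with
  | leaf a => rintro ⟨⟩; rfl
  | node cs ih =>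
    rintro (_ | ⟨hcs, hperm⟩)
    rw [labelList_node, labelList_node]
    refine List.Forall₂.flatten_perm ?_ |>.trans (hperm.map _).flatten
    simpa using hcs.imp_of_mem fun c hc _ => ih c hc

theorem Subtree.nodup {s t : PTree α} (h : Subtree s t) (ht : t.labelList.Nodup) :
    s.labelList.Nodup := by
  induction h with
  | refl => exact ht
  | child hc _ ih =>
    rw [labelList_node, List.nodup_flatten] at ht
    exact ih (ht.1 _ (List.mem_map_of_mem hc))

theorem OSubtree.nodup {T : PTree α} {a : Option (PTree α)} (h : OSubtree T a)
    (hT : T.labelList.Nodup) : ∀ t ∈ a, t.labelList.Nodup := by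
  rintro t rfl
  exact Subtree.nodup h hT

theorem OIso.rel {o p : Option (PTree α)} : OIso o p → Option.Rel Iso o p := by
  match o, p with
  | none, none => exact fun _ => .none
  | some _, some _ => exact fun h => .some h
  | none, some _ | some _, none => nofun

theorem oiso_connect {L M M' : List (PTree α)} (h : List.Forall₂ Iso L M') (hp : M'.Perm M) :
    OIso (connect L) (connect M) := by
  rcases h with _ | ⟨h₁, _ | ⟨h₂, h₃⟩⟩
  · obtain rfl := hp.nil_eq
    trivial
  · obtain rfl := hp.singleton_eq
    exact h₁
  · match M, hp with
    | _ :: _ :: _, hp => exact Iso.node (.cons h₁ (.cons h₂ h₃)) hp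
    | [], hp | [_], hp => simpa using hp.length_eq

end Iso

section Labels

variable {α : Type} [DecidableEq α]

theorem mem_labels {a : α} {t : PTree α} : a ∈ t.labels ↔ a ∈ t.labelList :=
  List.mem_toFinset

theorem mem_labels_leaf {a b : α} : a ∈ (leaf b).labels ↔ a = b := by
  simp [mem_labels, labelList]

theorem mem_labels_node {a : α} {cs : List (PTree α)} :
    a ∈ (node cs).labels ↔ ∃ c ∈ cs, a ∈ c.labels := by
  simp [mem_labels, labelList_node]

theorem Iso.labels_eq {t u : PTree α} (h : Iso t u) : t.labels = u.labels :=
  Finset.ext fun _ => by simp only [mem_labels, h.labelList_perm.mem_iff]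

theorem OIso.olabels_eq {o p : Option (PTree α)} : OIso o p → olabels o = olabels p := by
  match o, p with
  | none, none => exact fun _ => rfl
  | some _, some _ => exact Iso.labels_eq
  | none, some _ | some _, none => nofun

theorem Subtree.labels_subset {s t : PTree α} (h : Subtree s t) : s.labels ⊆ t.labels := by
  induction h with
  | refl => exact subset_rfl
  | child hc _ ih => exact fun a ha => mem_labels_node.2 ⟨_, hc, ih ha⟩

theorem nodup_labelList_node_ofFn_iff {n : ℕ} (X : Fin n → PTree α) :
    (node (List.ofFn X)).labelList.Nodup ↔
      (∀ j, (X j).labelList.Nodup) ∧ Pairwise fun j j' => Disjoint (X j).labels (X j').labels := by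
  rw [labelList_node, List.nodup_flatten, List.map_ofFn, List.pairwise_ofFn, pairwise_iff_lt]
  simp [labels, List.disjoint_toFinset_iff_disjoint]

theorem eq_of_mem_labels_get {cs : List (PTree α)} (h : (node cs).labelList.Nodup)
    {a : α} {m m' : Fin cs.length} (hm : a ∈ (cs.get m).labels)
    (hm' : a ∈ (cs.get m').labels) : m = m' := by
  rw [← List.ofFn_get cs, nodup_labelList_node_ofFn_iff] at h
  by_contra hne
  exact Finset.disjoint_left.1 (h.2 hne) hm hm'

theorem mem_olabels_map_get {cs : List (PTree α)} {o : Option (Fin cs.length)} {a : α} :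
    a ∈ olabels (o.map cs.get) ↔ ∃ m, o = some m ∧ a ∈ (cs.get m).labels := by
  cases o <;> simp [olabels]

theorem restrict_leaf (S : Finset α) (a : α) :
    restrict S (leaf a) = if a ∈ S then some (leaf a) else none := by
  rw [restrict]

theorem restrict_node (S : Finset α) (cs : List (PTree α)) :
    restrict S (node cs) = connect (cs.map (restrict S)).reduceOption := by
  rw [restrict, List.attach_map_val]

theorem restrict_congr {S S' : Finset α} {t : PTree α} (h : ∀ a ∈ t.labels, a ∈ S ↔ a ∈ S') :
    restrict S t = restrict S' t := by
  induction t with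
  | leaf a => simp only [restrict_leaf, h a (mem_labels_leaf.2 rfl)]
  | node cs ih =>
    simp only [restrict_node]
    congr 2
    exact List.map_congr_left fun c hc => ih c hc fun a ha => h a (mem_labels_node.2 ⟨c, hc, ha⟩)

theorem orestrict_congr {S S' : Finset α} {o : Option (PTree α)}
    (h : ∀ a ∈ olabels o, a ∈ S ↔ a ∈ S') : orestrict S o = orestrict S' o := by
  cases o with
  | none => rfl
  | some t => exact restrict_congr h

theorem restrict_eq_none {S : Finset α} {t : PTree α} (h : ∀ a ∈ t.labels, a ∉ S) :
    restrict S t = none := by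
  induction t with
  | leaf a => simp [restrict_leaf, h a (mem_labels_leaf.2 rfl)]
  | node cs ih =>
    rw [restrict_node, List.reduceOption, List.filterMap_eq_nil_iff.2]
    · rfl
    · simp only [List.mem_map, forall_exists_index, and_imp, forall_apply_eq_imp_iff₂]
      exact fun c hc => ih c hc fun a ha => h a (mem_labels_node.2 ⟨c, hc, ha⟩)

theorem Iso.restrict (S : Finset α) {t u : PTree α} :
    Iso t u → OIso (restrict S t) (restrict S u) := by
  induction t generalizing u with
  | leaf a => rintro ⟨⟩; exact OIso.refl _
  | node cs ih =>
    rintro (_ | ⟨hcs, hperm⟩)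
    rw [restrict_node, restrict_node]
    refine oiso_connect (List.Forall₂.reduceOption ?_) ((hperm.map _).filterMap _)
    simpa using hcs.imp_of_mem fun c hc _ h => (ih c hc h).rel

theorem OIso.orestrict (S : Finset α) {o p : Option (PTree α)} :
    OIso o p → OIso (orestrict S o) (orestrict S p) := by
  match o, p with
  | none, none => exact fun _ => trivial
  | some _, some _ => exact Iso.restrict S
  | none, some _ | some _, none => nofun

end Labels

section Decomposition

variable {α : Type} {d : ℕ} {a : Option (PTree α)} {b : Fin d → Option (PTree α)}

theorem DecompAt.single_or_children (h : DecompAt a b) :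
    (∃ j₀, OIso (b j₀) a ∧ ∀ j ≠ j₀, b j = none) ∨
    ∃ (cs : List (PTree α)) (idx : Fin d → Option (Fin cs.length)), a = some (node cs) ∧
      (∀ j, OIso (b j) ((idx j).map cs.get)) ∧
      ∀ j j' m, idx j = some m → idx j' = some m → j = j' := by
  rcases h with h | ⟨cs, rfl, -, idx, hnone, hiso, hinj⟩
  · exact .inl h
  refine .inr ⟨cs, idx, rfl, fun j => ?_, hinj⟩
  cases hb : b j <;> cases hidx : idx j
  · trivial
  · simp [(hnone j).1 hb] at hidx
  · simp [(hnone j).2 hidx] at hb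
  · exact hiso j _ _ hb hidx

variable [DecidableEq α]

theorem DecompAt.olabels_subset (h : DecompAt a b) (j : Fin d) : olabels (b j) ⊆ olabels a := by
  rcases h.single_or_children with ⟨j₀, hj₀, hrest⟩ | ⟨cs, idx, rfl, hmatch, -⟩
  · by_cases hj : j = j₀
    · exact hj ▸ hj₀.olabels_eq.subset
    · simp [hrest j hj, olabels]
  · intro x hx
    obtain ⟨m, -, hxm⟩ := mem_olabels_map_get.1 ((hmatch j).olabels_eq ▸ hx)
    exact mem_labels_node.2 ⟨_, List.get_mem cs m, hxm⟩

theorem DecompAt.disjoint_olabels (h : DecompAt a b) (ha : ∀ t ∈ a, t.labelList.Nodup)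
    {j j' : Fin d} (hne : j ≠ j') : Disjoint (olabels (b j)) (olabels (b j')) := by
  rcases h.single_or_children with ⟨j₀, -, hrest⟩ | ⟨cs, idx, rfl, hmatch, hinj⟩
  · by_cases hj : j = j₀
    · simp [hrest j' (hj ▸ hne.symm), olabels]
    · simp [hrest j hj, olabels]
  · refine Finset.disjoint_left.2 fun x hx hx' => hne ?_
    obtain ⟨m, hm, hxm⟩ := mem_olabels_map_get.1 ((hmatch j).olabels_eq ▸ hx)
    obtain ⟨m', hm', hxm'⟩ := mem_olabels_map_get.1 ((hmatch j').olabels_eq ▸ hx')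
    exact hinj j j' m hm (eq_of_mem_labels_get (ha _ rfl) hxm hxm' ▸ hm')

theorem DecompAt.oiso_connect_orestrict (h : DecompAt a b) (ha : ∀ t ∈ a, t.labelList.Nodup)
    {T : Finset α} (hcover : ∀ x ∈ T, x ∈ olabels a → ∃ j, x ∈ olabels (b j)) :
    OIso (connect (List.ofFn fun j => orestrict T (b j)).reduceOption) (orestrict T a) := by
  rcases h.single_or_children with ⟨j₀, hj₀, hrest⟩ | ⟨cs, idx, rfl, hmatch, hinj⟩
  · have hperm := List.perm_reduceOption_ofFn_of_eq_none (f := fun j => orestrict T (b j))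
      (j₀ := j₀) fun j hj => by simp [hrest j hj, orestrict]
    refine (oiso_connect (List.forall₂_same.2 fun t _ => Iso.refl t) hperm).trans ?_
    cases hb : orestrict T (b j₀) <;> simpa [connect, hb] using hj₀.orestrict T
  · set F : Fin cs.length → Option (PTree α) := fun m => restrict T (cs.get m)
    have hsurj : ∀ m, F m ≠ none → ∃ j, idx j = some m := by
      intro m hm
      by_contra! hno
      refine hm (restrict_eq_none fun x hx hxT => ?_)
      obtain ⟨j, hxj⟩ := hcover x hxT (mem_labels_node.2 ⟨_, List.get_mem cs m, hx⟩)
      obtain ⟨m', hm', hxm'⟩ := mem_olabels_map_get.1 ((hmatch j).olabels_eq ▸ hxj)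
      exact hno j (eq_of_mem_labels_get (ha _ rfl) hxm' hx ▸ hm')
    have hchildren : cs.map (restrict T) = List.ofFn F := by
      conv_lhs => rw [← List.ofFn_get cs]
      rw [List.map_ofFn]
      rfl
    rw [orestrict, Option.bind_some, restrict_node]
    refine oiso_connect (List.Forall₂.reduceOption (List.forall₂_ofFn fun j => ?_))
      (hchildren ▸ List.perm_reduceOption_ofFn_bind hinj hsurj)
    simpa [orestrict, F, Option.bind_map, Function.comp_def] using ((hmatch j).orestrict T).rel

end Decomposition

section Supertree

variable {α : Type} [DecidableEq α] {k d : ℕ} {𝒯 : Fin k → PTree α}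

theorem OSubtree.olabels_subset {T : PTree α} {a : Option (PTree α)} (h : OSubtree T a) :
    olabels a ⊆ T.labels := by
  cases a with
  | none => exact Finset.empty_subset _
  | some t => exact Subtree.labels_subset h

theorem mem_labels_node_ofFn {n : ℕ} {X : Fin n → PTree α} {x : α} :
    x ∈ (node (List.ofFn X)).labels ↔ ∃ j, x ∈ (X j).labels := by
  simp [mem_labels_node]

theorem treeSize_node_ofFn {n : ℕ} {X : Fin n → PTree α}
    (hdisj : Pairwise fun j j' => Disjoint (X j).labels (X j').labels) :
    (node (List.ofFn X)).treeSize = ∑ j, (X j).treeSize := by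
  have : (node (List.ofFn X)).labels = Finset.univ.biUnion fun j => (X j).labels := by
    ext x
    simp [mem_labels_node_ofFn]
  rw [treeSize, this, Finset.card_biUnion fun j _ j' _ hne => hdisj hne]
  rfl

theorem IsEnclosedSupertree.mem_olabels {A : Fin k → Option (PTree α)} {X : PTree α}
    (h : IsEnclosedSupertree 𝒯 A X) {x : α} (hX : x ∈ X.labels) {i : Fin k}
    (hT : x ∈ (𝒯 i).labels) : x ∈ olabels (A i) :=
  h.2.2.2 i (Finset.mem_inter.2 ⟨hX, hT⟩)

theorem isEnclosedSupertree_node_nil (A : Fin k → Option (PTree α)) :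
    IsEnclosedSupertree 𝒯 A (node []) := by
  refine ⟨by simp [labelList_node], by simp [labels, labelList_node], fun i => ?_,
    by simp [labels, labelList_node]⟩
  rw [restrict_node, orestrict_congr (S' := ∅) (by simp [labels, labelList_node])]
  cases hA : A i with
  | none => trivial
  | some t => rw [orestrict, Option.bind_some, restrict_eq_none (by simp)]; trivial

theorem bddAbove_treeSize_isEnclosedSupertree (A : Fin k → Option (PTree α)) :
    BddAbove {m | ∃ X, IsEnclosedSupertree 𝒯 A X ∧ m = X.treeSize} :=
  ⟨(allLabels 𝒯).card, by
    rintro m ⟨X, hX, rfl⟩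
    exact Finset.card_le_card hX.2.1⟩

theorem IsEnclosedSupertree.treeSize_le_masp {A : Fin k → Option (PTree α)} {X : PTree α}
    (h : IsEnclosedSupertree 𝒯 A X) : X.treeSize ≤ masp 𝒯 A :=
  le_csSup (bddAbove_treeSize_isEnclosedSupertree A) ⟨X, h, rfl⟩

theorem exists_isEnclosedSupertree_treeSize_eq_masp (A : Fin k → Option (PTree α)) :
    ∃ X, IsEnclosedSupertree 𝒯 A X ∧ X.treeSize = masp 𝒯 A := by
  have hne : {m | ∃ X, IsEnclosedSupertree 𝒯 A X ∧ m = X.treeSize}.Nonempty :=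
    ⟨_, node [], isEnclosedSupertree_node_nil A, rfl⟩
  obtain ⟨X, hX, hsize⟩ := Nat.sSup_mem hne (bddAbove_treeSize_isEnclosedSupertree A)
  exact ⟨X, hX, hsize.symm⟩

end Supertree

section JoinDecomposition

variable {α : Type} [DecidableEq α] {k d : ℕ} {𝒯 : Fin k → PTree α}
  {A : Fin k → Option (PTree α)} {B : Fin d → Fin k → Option (PTree α)} {X : Fin d → PTree α}

theorem pairwise_disjoint_labels_of_decompAt (hphylo : ∀ i, (𝒯 i).labelList.Nodup)
    (hA : ∀ i, OSubtree (𝒯 i) (A i)) (hdec : ∀ i, DecompAt (A i) fun j => B j i)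
    (hX : ∀ j, IsEnclosedSupertree 𝒯 (B j) (X j)) :
    Pairwise fun j j' => Disjoint (X j).labels (X j').labels := by
  intro j j' hne
  refine Finset.disjoint_left.2 fun x hx hx' => ?_
  obtain ⟨i, -, hxi⟩ := Finset.mem_biUnion.1 ((hX j).2.1 hx)
  exact Finset.disjoint_left.1 ((hdec i).disjoint_olabels ((hA i).nodup (hphylo i)) hne)
    ((hX j).mem_olabels hx hxi) ((hX j').mem_olabels hx' hxi)

theorem isAgreementSupertree_node_ofFn (hphylo : ∀ i, (𝒯 i).labelList.Nodup)
    (hA : ∀ i, OSubtree (𝒯 i) (A i)) (hdec : ∀ i, DecompAt (A i) fun j => B j i)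
    (hX : ∀ j, IsEnclosedSupertree 𝒯 (B j) (X j)) :
    IsAgreementSupertree A (node (List.ofFn X)) := by
  intro i
  have hdisj : ∀ {j j'}, j ≠ j' → Disjoint (olabels (B j i)) (olabels (B j' i)) :=
    (hdec i).disjoint_olabels ((hA i).nodup (hphylo i))
  have hBT : ∀ j, olabels (B j i) ⊆ (𝒯 i).labels :=
    fun j => ((hdec i).olabels_subset j).trans (hA i).olabels_subset
  have hchild : ∀ j, OIso (restrict (olabels (A i)) (X j))
      (orestrict (node (List.ofFn X)).labels (B j i)) := by
    intro j
    rw [restrict_congr (S' := olabels (B j i)) fun x hx =>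
        ⟨fun hxA => (hX j).mem_olabels hx ((hA i).olabels_subset hxA),
          fun hxB => (hdec i).olabels_subset j hxB⟩,
      orestrict_congr (S' := (X j).labels) fun x hxB => ⟨fun hxZ => ?_, fun hxX =>
        mem_labels_node_ofFn.2 ⟨j, hxX⟩⟩]
    · exact (hX j).2.2.1 i
    · obtain ⟨j', hxj'⟩ := mem_labels_node_ofFn.1 hxZ
      obtain rfl | hne := eq_or_ne j j'
      · exact hxj'
      · exact absurd ((hX j').mem_olabels hxj' (hBT j hxB))
          (Finset.disjoint_left.1 (hdisj hne) hxB)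
  rw [restrict_node, List.map_ofFn]
  refine (oiso_connect (List.Forall₂.reduceOption (List.forall₂_ofFn fun j => (hchild j).rel))
    (List.Perm.refl _)).trans ((hdec i).oiso_connect_orestrict ((hA i).nodup (hphylo i)) ?_)
  intro x hxZ hxA
  obtain ⟨j, hxj⟩ := mem_labels_node_ofFn.1 hxZ
  exact ⟨j, (hX j).mem_olabels hxj ((hA i).olabels_subset hxA)⟩

theorem isEnclosedSupertree_node_ofFn (hphylo : ∀ i, (𝒯 i).labelList.Nodup)
    (hA : ∀ i, OSubtree (𝒯 i) (A i)) (hdec : ∀ i, DecompAt (A i) fun j => B j i)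
    (hX : ∀ j, IsEnclosedSupertree 𝒯 (B j) (X j)) :
    IsEnclosedSupertree 𝒯 A (node (List.ofFn X)) := by
  refine ⟨(nodup_labelList_node_ofFn_iff X).2
      ⟨fun j => (hX j).1, pairwise_disjoint_labels_of_decompAt hphylo hA hdec hX⟩,
    fun x hx => ?_, isAgreementSupertree_node_ofFn hphylo hA hdec hX, fun i x hx => ?_⟩
  · obtain ⟨j, hxj⟩ := mem_labels_node_ofFn.1 hx
    exact (hX j).2.1 hxj
  · obtain ⟨hxZ, hxT⟩ := Finset.mem_inter.1 hx
    obtain ⟨j, hxj⟩ := mem_labels_node_ofFn.1 hxZ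
    exact (hdec i).olabels_subset j ((hX j).mem_olabels hxj hxT)

end JoinDecomposition

end PTree

/-- If `(ℬ₁,…,ℬ_d)` is a decomposition of a sub-forest `𝒜`
of `𝒯` then `masp(𝒜) ≥ masp(ℬ₁) + … + masp(ℬ_d)`. -/
theorem maximum_agreement_supertree_stmt11
    {α : Type} [DecidableEq α] {k : ℕ} (𝒯 : Fin k → PTree α)
    (hphylo : ∀ i, (𝒯 i).labelList.Nodup)
    (A : Fin k → Option (PTree α))
    (hA : PTree.IsSubForest 𝒯 A)
    {d : ℕ} (B : Fin d → Fin k → Option (PTree α))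
    (hdec : PTree.IsDecomposition 𝒯 A d B) :
    ∑ j, PTree.masp 𝒯 (B j) ≤ PTree.masp 𝒯 A := by
  choose X hX hsize using fun j => PTree.exists_isEnclosedSupertree_treeSize_eq_masp (𝒯 := 𝒯) (B j)
  have hdisj := PTree.pairwise_disjoint_labels_of_decompAt hphylo hA.1 hdec.2.2 hX
  calc ∑ j, PTree.masp 𝒯 (B j) = (PTree.node (List.ofFn X)).treeSize := by
        simp only [PTree.treeSize_node_ofFn hdisj, hsize]
    _ ≤ PTree.masp 𝒯 A :=
        (PTree.isEnclosedSupertree_node_ofFn hphylo hA.1 hdec.2.2 hX).treeSize_le_masp
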